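/- arXiv:0812.0982 — 2 statements merged into one kernel-verified Lean document; each statement's English description precedes it below -/
import Mathlib

section
/- Let d ≥ 1, α ∈ (0,1), β ∈ (0,1) with α+β ∈ (0,1)∪(1,2). There exists a constant c, depending only on d, α, β, such that for every f ∈ C^{α+β}(ℝ^d) and all x, k ∈ ℝ^d, ∫_{ℝ^d∖{0}} |E_h f(x+k) − E_h f(x)| · |h|^{−(d+α)} dh ≤ c·|k|^β·‖f‖_{C^{α+β}}, where E_h f(x) = f(x+h) − f(x). -/
open MeasureTheory ENNReal NNReal

noncomputable section

/-- Euclidean space `ℝ^d`. -/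
abbrev E (d : ℕ) := EuclideanSpace ℝ (Fin d)

/-- Sup norm (as an extended nonnegative real). -/
def supNorm {d : ℕ} (f : E d → ℝ) : ℝ≥0∞ := ⨆ x, (‖f x‖₊ : ℝ≥0∞)

/-- Hölder seminorm of order `γ`. -/
def hSemi {d : ℕ} (γ : ℝ) (f : E d → ℝ) : ℝ≥0∞ :=
  ⨆ x, ⨆ h, (‖f (x + h) - f x‖₊ : ℝ≥0∞) / (‖h‖₊ : ℝ≥0∞) ^ γ

/-- Partial derivative in the `i`-th coordinate direction. -/
def pd {d : ℕ} (i : Fin d) (f : E d → ℝ) : E d → ℝ :=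
  fun x => fderiv ℝ f x (EuclideanSpace.single i 1)

/-- Hölder norm `‖f‖_{C^γ}` for non-integer `γ ∈ (0,3)`. -/
def holderNorm {d : ℕ} (γ : ℝ) (f : E d → ℝ) : ℝ≥0∞ :=
  if γ < 1 then supNorm f + hSemi γ f
  else if γ < 2 then supNorm f + ∑ i : Fin d, hSemi (γ - 1) (pd i f)
  else supNorm f + ∑ i : Fin d, ∑ j : Fin d, hSemi (γ - 2) (pd i (pd j f))

/-- `f` belongs to the Hölder space `C^γ(ℝ^d)`. -/
def InHolder {d : ℕ} (γ : ℝ) (f : E d → ℝ) : Prop :=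
  ContDiff ℝ (⌊γ⌋₊ : ℕ) f ∧ holderNorm γ f < ⊤


/-- First difference operator `E_h f(x) = f(x+h) - f(x)`. -/
def Ediff {d : ℕ} (f : E d → ℝ) (h x : E d) : ℝ := f (x + h) - f x

/-!
Write `D(h) = E_h f(x+k) - E_h f(x)`, which is symmetric in `h` and `k`:
`D(h) = E_k f(x+h) - E_k f(x)`, and split the integral at `|h| = |k|`. If `α + β < 1`, the
Hölder bound gives `|D(h)| ≤ 2 [f]_{α+β} min(|h|, |k|)^{α+β}`. If `α + β > 1`, the mean value
theorem for `y ↦ E_u f(y)` together with the Hölder bound on `∇f` gives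
`|D(h)| ≤ [∇f]_{α+β-1} min(|k|^{α+β-1} |h|, |h|^{α+β-1} |k|)`. In both cases the bound is
`|h|^a |k|^{α+β-a}` for `|h| < |k|` and `|h|^b |k|^{α+β-b}` for `|h| ≥ |k|` with `b < α < a`, so
`|h|^{a-d-α}` is integrable on the unit ball and `|h|^{b-d-α}` outside it, and scaling both
integrals to radius `|k|` produces the factor `|k|^{α+β-α} = |k|^β`.
-/

open Metric Module

theorem enorm_norm_rpow {V : Type*} [NormedAddCommGroup V] {x : V} (hx : x ≠ 0) (p : ℝ) :
    ‖‖x‖ ^ p‖ₑ = ‖x‖ₑ ^ p := by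
  rw [Real.enorm_of_nonneg (by positivity), ← ENNReal.ofReal_rpow_of_pos (norm_pos_iff.2 hx),
    ofReal_norm]

theorem preimage_smul_ball_zero {V : Type*} [NormedAddCommGroup V] [NormedSpace ℝ V] {R : ℝ}
    (hR : 0 < R) : (R • ·) ⁻¹' ball (0 : V) R = ball 0 1 := by
  ext x
  simp [norm_smul, abs_of_pos hR, hR]

theorem ENNReal.div_rpow_le_mul_rpow_sub {x y c : ℝ≥0∞} (hx₀ : x ≠ 0) (hx : x ≠ ⊤) {a t : ℝ}
    (h : y ≤ c * x ^ a) : y / x ^ t ≤ c * x ^ (a - t) :=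
  calc y / x ^ t ≤ c * x ^ a / x ^ t := by gcongr
    _ = c * x ^ (a - t) := by
      rw [div_eq_mul_inv, ← ENNReal.rpow_neg, mul_assoc, ← ENNReal.rpow_add _ _ hx₀ hx,
        sub_eq_add_neg]

theorem ContinuousLinearMap.enorm_le_sum_enorm_single {ι W : Type*} [Fintype ι] [DecidableEq ι]
    [NormedAddCommGroup W] [NormedSpace ℝ W] (ℓ : EuclideanSpace ℝ ι →L[ℝ] W) :
    ‖ℓ‖ₑ ≤ ∑ i, ‖ℓ (EuclideanSpace.single i 1)‖ₑ := by
  suffices ‖ℓ‖₊ ≤ ∑ i, ‖ℓ (EuclideanSpace.single i 1)‖₊ by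
    simp only [enorm_eq_nnnorm]; exact_mod_cast this
  refine ℓ.opNNNorm_le_bound _ fun v => ?_
  conv_lhs => rw [← (EuclideanSpace.basisFun ι ℝ).sum_repr v]
  simp only [map_sum, map_smul, EuclideanSpace.basisFun_repr, EuclideanSpace.basisFun_apply]
  calc ‖∑ i, v i • ℓ (EuclideanSpace.single i 1)‖₊
      ≤ ∑ i, ‖v i‖₊ * ‖ℓ (EuclideanSpace.single i 1)‖₊ :=
        (nnnorm_sum_le _ _).trans_eq (by simp only [nnnorm_smul])
    _ ≤ ∑ i, ‖v‖₊ * ‖ℓ (EuclideanSpace.single i 1)‖₊ := by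
        gcongr with i; exact PiLp.nnnorm_apply_le v i
    _ = (∑ i, ‖ℓ (EuclideanSpace.single i 1)‖₊) * ‖v‖₊ := by
        rw [Finset.sum_mul]; simp only [mul_comm]

theorem enorm_sub_sub_sub_le_of_enorm_fderiv_sub_le {V W : Type*} [NormedAddCommGroup V]
    [NormedSpace ℝ V] [NormedAddCommGroup W] [NormedSpace ℝ W] {f : V → W}
    (hf : Differentiable ℝ f) {u : V} {C : ℝ≥0∞} (hC : C ≠ ⊤)
    (hfd : ∀ y, ‖fderiv ℝ f (y + u) - fderiv ℝ f y‖ₑ ≤ C) (y w : V) :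
    ‖f (y + w + u) - f (y + w) - (f (y + u) - f y)‖ₑ ≤ C * ‖w‖ₑ := by
  lift C to ℝ≥0 using hC
  set g : V → W := fun y => f (y + u) - f y
  have hg (y : V) : HasFDerivAt g (fderiv ℝ f (y + u) - fderiv ℝ f y) y :=
    ((hasFDerivAt_comp_add_right u).2 (hf (y + u)).hasFDerivAt).sub (hf y).hasFDerivAt
  have hlip : LipschitzWith C g :=
    lipschitzWith_of_nnnorm_fderiv_le (fun y => (hg y).differentiableAt)
      fun y => by rw [(hg y).fderiv]; exact_mod_cast hfd y
  simpa [edist_eq_enorm_sub, g] using hlip.edist_le_mul (y + w) y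

section HaarMeasure

variable {V : Type*} [NormedAddCommGroup V] [NormedSpace ℝ V] [FiniteDimensional ℝ V]
  [MeasurableSpace V] [BorelSpace V] (μ : Measure V) [μ.IsAddHaarMeasure]

def splitPowerIntegral (p q : ℝ) : ℝ≥0∞ :=
  ∫⁻ x in ball 0 1, ‖x‖ₑ ^ p ∂μ + ∫⁻ x in (ball 0 1)ᶜ, ‖x‖ₑ ^ q ∂μ

theorem setLIntegral_enorm_rpow_eq_of_preimage_smul {R : ℝ} (hR : 0 < R) (s : Set V) (p : ℝ) :
    ∫⁻ x in s, ‖x‖ₑ ^ p ∂μ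
      = ENNReal.ofReal R ^ (finrank ℝ V + p) * ∫⁻ x in (R • ·) ⁻¹' s, ‖x‖ₑ ^ p ∂μ := by
  set c := ENNReal.ofReal R ^ (finrank ℝ V : ℝ)
  have hc : c = ENNReal.ofReal (R ^ finrank ℝ V) := by
    simp only [c, ENNReal.rpow_natCast, ENNReal.ofReal_pow hR.le]
  have hc₀ : c ≠ 0 := by rw [hc]; positivity
  have hR' : ENNReal.ofReal R ≠ 0 := by simpa using hR
  have hmap : μ.map (R • ·) = c⁻¹ • μ := by
    rw [Measure.map_addHaar_smul μ hR.ne', abs_of_pos (by positivity),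
      ENNReal.ofReal_inv_of_pos (by positivity), hc]
  have hscale : c⁻¹ * ∫⁻ x in s, ‖x‖ₑ ^ p ∂μ
      = ENNReal.ofReal R ^ p * ∫⁻ x in (R • ·) ⁻¹' s, ‖x‖ₑ ^ p ∂μ := by
    rw [← smul_eq_mul, ← lintegral_smul_measure, ← Measure.restrict_smul, ← hmap,
      ← MeasurableEquiv.coe_smul₀ hR.ne', MeasurableEquiv.restrict_map, lintegral_map_equiv,
      ← lintegral_const_mul' _ _ (ENNReal.rpow_ne_top_of_ne_zero hR' ofReal_ne_top)]
    simp [enorm_smul, ENNReal.mul_rpow_of_ne_top, Real.enorm_of_nonneg hR.le]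
  calc ∫⁻ x in s, ‖x‖ₑ ^ p ∂μ = c * (c⁻¹ * ∫⁻ x in s, ‖x‖ₑ ^ p ∂μ) := by
        rw [← mul_assoc, ENNReal.mul_inv_cancel hc₀ (by rw [hc]; simp), one_mul]
    _ = _ := by rw [hscale, ← mul_assoc, ← ENNReal.rpow_add _ _ hR' ofReal_ne_top]

theorem setLIntegral_ball_enorm_rpow {R : ℝ≥0} (hR : 0 < R) (p : ℝ) :
    ∫⁻ x in ball 0 R, ‖x‖ₑ ^ p ∂μ
      = (R : ℝ≥0∞) ^ (finrank ℝ V + p) * ∫⁻ x in ball 0 1, ‖x‖ₑ ^ p ∂μ := by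
  rw [setLIntegral_enorm_rpow_eq_of_preimage_smul μ (NNReal.coe_pos.2 hR),
    preimage_smul_ball_zero (NNReal.coe_pos.2 hR), ofReal_coe_nnreal]

theorem setLIntegral_compl_ball_enorm_rpow {R : ℝ≥0} (hR : 0 < R) (p : ℝ) :
    ∫⁻ x in (ball 0 R)ᶜ, ‖x‖ₑ ^ p ∂μ
      = (R : ℝ≥0∞) ^ (finrank ℝ V + p) * ∫⁻ x in (ball 0 1)ᶜ, ‖x‖ₑ ^ p ∂μ := by
  rw [setLIntegral_enorm_rpow_eq_of_preimage_smul μ (NNReal.coe_pos.2 hR), Set.preimage_compl,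
    preimage_smul_ball_zero (NNReal.coe_pos.2 hR), ofReal_coe_nnreal]

theorem setLIntegral_ball_enorm_rpow_lt_top [Nontrivial V] {p : ℝ}
    (hp : -(finrank ℝ V : ℝ) < p) : ∫⁻ x in ball 0 1, ‖x‖ₑ ^ p ∂μ < ⊤ := by
  have hint : IntegrableOn (fun x : V => ‖x‖ ^ p) (ball 0 1) μ :=
    integrableOn_ball_of_norm_le_rpow (C := 1) (α := -p) finrank_pos (by linarith)
      (ae_of_all _ fun x => by simp [abs_of_nonneg, Real.rpow_nonneg])
      (measurable_norm.pow_const p).aestronglyMeasurable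
  refine lt_of_eq_of_lt (lintegral_congr_ae ?_) hint.2
  filter_upwards [ae_restrict_of_ae (μ.ae_ne 0)] with x hx
  exact (enorm_norm_rpow hx p).symm

theorem setLIntegral_compl_ball_enorm_rpow_lt_top {p : ℝ} (hp : p < -(finrank ℝ V : ℝ)) :
    ∫⁻ x in (ball 0 1)ᶜ, ‖x‖ₑ ^ p ∂μ < ⊤ := by
  have hp₀ : p ≤ 0 := by linarith [(finrank ℝ V).cast_nonneg (α := ℝ)]
  -- on `‖x‖ ≥ 1` we have `1 + ‖x‖ ≤ 2 ‖x‖`, so the Japanese bracket `(1 + ‖x‖) ^ p` dominates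
  have hbound : ∀ x ∈ (ball (0 : V) 1)ᶜ,
      ‖x‖ₑ ^ p ≤ ENNReal.ofReal (2 ^ (-p)) * ENNReal.ofReal ((1 + ‖x‖) ^ p) := by
    intro x hx
    rw [Set.mem_compl_iff, mem_ball_zero_iff, not_lt] at hx
    have hx₀ : x ≠ 0 := norm_pos_iff.1 (by linarith)
    rw [← enorm_norm_rpow hx₀, Real.enorm_of_nonneg (by positivity),
      ← ENNReal.ofReal_mul (by positivity)]
    gcongr
    calc ‖x‖ ^ p = 2 ^ (-p) * (2 * ‖x‖) ^ p := by
          rw [Real.mul_rpow (by norm_num) (by positivity), ← mul_assoc,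
            ← Real.rpow_add (by norm_num)]
          simp
      _ ≤ 2 ^ (-p) * (1 + ‖x‖) ^ p := by
          gcongr 2 ^ (-p) * ?_
          exact Real.rpow_le_rpow_of_nonpos (by positivity) (by linarith) hp₀
  calc ∫⁻ x in (ball 0 1)ᶜ, ‖x‖ₑ ^ p ∂μ
      ≤ ∫⁻ x in (ball 0 1)ᶜ, ENNReal.ofReal (2 ^ (-p)) * ENNReal.ofReal ((1 + ‖x‖) ^ p) ∂μ :=
        setLIntegral_mono' measurableSet_ball.compl hbound
    _ ≤ ∫⁻ x, ENNReal.ofReal (2 ^ (-p)) * ENNReal.ofReal ((1 + ‖x‖) ^ p) ∂μ :=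
        setLIntegral_le_lintegral _ _
    _ < ⊤ := by
        rw [lintegral_const_mul' _ _ ofReal_ne_top]
        refine ENNReal.mul_lt_top ofReal_lt_top ?_
        simpa using finite_integral_one_add_norm (μ := μ) (r := -p) (by linarith)

theorem splitPowerIntegral_lt_top [Nontrivial V] {p q : ℝ} (hp : -(finrank ℝ V : ℝ) < p)
    (hq : q < -(finrank ℝ V : ℝ)) : splitPowerIntegral μ p q < ⊤ :=
  ENNReal.add_lt_top.2
    ⟨setLIntegral_ball_enorm_rpow_lt_top μ hp, setLIntegral_compl_ball_enorm_rpow_lt_top μ hq⟩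

theorem setLIntegral_div_enorm_rpow_le [Nontrivial V] {s : Set V} (hs : MeasurableSet s)
    {F : V → ℝ≥0∞} {K : ℝ≥0∞} {a t : ℝ} (hF : ∀ h ∈ s, F h ≤ K * ‖h‖ₑ ^ a) :
    ∫⁻ h in s, F h / ‖h‖ₑ ^ t ∂μ ≤ K * ∫⁻ h in s, ‖h‖ₑ ^ (a - t) ∂μ := by
  rw [← lintegral_const_mul _ (by fun_prop)]
  refine setLIntegral_mono_ae' hs ?_
  filter_upwards [μ.ae_ne 0] with h h₀ hh
  exact ENNReal.div_rpow_le_mul_rpow_sub (by simpa using h₀) enorm_ne_top (hF h hh)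

theorem lintegral_div_enorm_rpow_le_of_split [Nontrivial V] {F : V → ℝ≥0∞} {M : ℝ≥0∞}
    {R : ℝ≥0} (hR : 0 < R) {α γ a b : ℝ}
    (hsmall : ∀ h : V, ‖h‖ < R → F h ≤ M * (R : ℝ≥0∞) ^ (γ - a) * ‖h‖ₑ ^ a)
    (hlarge : ∀ h : V, R ≤ ‖h‖ → F h ≤ M * (R : ℝ≥0∞) ^ (γ - b) * ‖h‖ₑ ^ b) :
    ∫⁻ h, F h / ‖h‖ₑ ^ (finrank ℝ V + α) ∂μ
      ≤ M * splitPowerIntegral μ (a - (finrank ℝ V + α)) (b - (finrank ℝ V + α))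
          * (R : ℝ≥0∞) ^ (γ - α) := by
  set n : ℝ := (finrank ℝ V : ℝ)
  have hR₀ : (R : ℝ≥0∞) ≠ 0 := by simpa using hR.ne'
  have hpow (c : ℝ) :
      (R : ℝ≥0∞) ^ (γ - c) * (R : ℝ≥0∞) ^ (n + (c - (n + α))) = (R : ℝ≥0∞) ^ (γ - α) := by
    rw [← ENNReal.rpow_add _ _ hR₀ coe_ne_top]; congr 1; ring
  have hinner : ∫⁻ h in ball 0 R, F h / ‖h‖ₑ ^ (n + α) ∂μ
      ≤ M * (∫⁻ x in ball 0 1, ‖x‖ₑ ^ (a - (n + α)) ∂μ) * (R : ℝ≥0∞) ^ (γ - α) :=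
    (setLIntegral_div_enorm_rpow_le μ measurableSet_ball
      fun h hh => hsmall h (mem_ball_zero_iff.1 hh)).trans_eq <| by
        rw [setLIntegral_ball_enorm_rpow μ hR, ← hpow a]; ring
  have houter : ∫⁻ h in (ball 0 R)ᶜ, F h / ‖h‖ₑ ^ (n + α) ∂μ
      ≤ M * (∫⁻ x in (ball 0 1)ᶜ, ‖x‖ₑ ^ (b - (n + α)) ∂μ) * (R : ℝ≥0∞) ^ (γ - α) :=
    (setLIntegral_div_enorm_rpow_le μ measurableSet_ball.compl
      fun h hh => hlarge h (not_lt.1 fun hlt => hh (mem_ball_zero_iff.2 hlt))).trans_eq <| by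
        rw [setLIntegral_compl_ball_enorm_rpow μ hR, ← hpow b]; ring
  calc ∫⁻ h, F h / ‖h‖ₑ ^ (n + α) ∂μ
      = ∫⁻ h in ball 0 R, F h / ‖h‖ₑ ^ (n + α) ∂μ
          + ∫⁻ h in (ball 0 R)ᶜ, F h / ‖h‖ₑ ^ (n + α) ∂μ :=
        (lintegral_add_compl _ measurableSet_ball).symm
    _ ≤ _ := (add_le_add hinner houter).trans_eq <| by rw [splitPowerIntegral]; ring

end HaarMeasure

theorem enorm_sub_le_hSemi_mul {d : ℕ} (γ : ℝ) (f : E d → ℝ) (y u : E d) :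
    ‖f (y + u) - f y‖ₑ ≤ hSemi γ f * ‖u‖ₑ ^ γ := by
  rcases eq_or_ne u 0 with rfl | hu
  · simp
  have hu' : ‖u‖ₑ ≠ 0 := by simpa using hu
  calc ‖f (y + u) - f y‖ₑ = ‖f (y + u) - f y‖ₑ / ‖u‖ₑ ^ γ * ‖u‖ₑ ^ γ :=
        (ENNReal.div_mul_cancel (ENNReal.rpow_pos (pos_iff_ne_zero.2 hu') enorm_ne_top).ne'
          (ENNReal.rpow_ne_top_of_ne_zero hu' enorm_ne_top)).symm
    _ ≤ hSemi γ f * ‖u‖ₑ ^ γ := by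
        gcongr
        exact le_iSup₂ (f := fun x h => (‖f (x + h) - f x‖₊ : ℝ≥0∞) / (‖h‖₊ : ℝ≥0∞) ^ γ) y u

theorem hSemi_le_holderNorm {d : ℕ} {γ : ℝ} (hγ : γ < 1) (f : E d → ℝ) :
    hSemi γ f ≤ holderNorm γ f := by
  rw [holderNorm, if_pos hγ]; exact le_add_self

theorem sum_hSemi_pd_le_holderNorm {d : ℕ} {γ : ℝ} (hγ₁ : 1 ≤ γ) (hγ₂ : γ < 2) (f : E d → ℝ) :
    ∑ i, hSemi (γ - 1) (pd i f) ≤ holderNorm γ f := by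
  rw [holderNorm, if_neg hγ₁.not_gt, if_pos hγ₂]; exact le_add_self

theorem Ediff_sub_Ediff_comm {d : ℕ} (f : E d → ℝ) (h k x : E d) :
    Ediff f h (x + k) - Ediff f h x = Ediff f k (x + h) - Ediff f k x := by
  simp only [Ediff, add_right_comm x k h]; ring

theorem enorm_Ediff_sub_Ediff_le_hSemi {d : ℕ} (γ : ℝ) (f : E d → ℝ) (h k x : E d) :
    ‖Ediff f h (x + k) - Ediff f h x‖ₑ ≤ 2 * hSemi γ f * ‖h‖ₑ ^ γ :=
  calc ‖Ediff f h (x + k) - Ediff f h x‖ₑ ≤ ‖Ediff f h (x + k)‖ₑ + ‖Ediff f h x‖ₑ :=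
        enorm_sub_le
    _ ≤ hSemi γ f * ‖h‖ₑ ^ γ + hSemi γ f * ‖h‖ₑ ^ γ :=
        add_le_add (enorm_sub_le_hSemi_mul γ f _ h) (enorm_sub_le_hSemi_mul γ f x h)
    _ = 2 * hSemi γ f * ‖h‖ₑ ^ γ := by ring

theorem enorm_Ediff_sub_Ediff_le_sum_hSemi_pd {d : ℕ} {τ : ℝ} (hτ : 0 ≤ τ) {f : E d → ℝ}
    (hf : Differentiable ℝ f) (hS : ∑ i, hSemi τ (pd i f) ≠ ⊤) (h k x : E d) :
    ‖Ediff f h (x + k) - Ediff f h x‖ₑ ≤ (∑ i, hSemi τ (pd i f)) * ‖h‖ₑ ^ τ * ‖k‖ₑ := by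
  refine enorm_sub_sub_sub_le_of_enorm_fderiv_sub_le hf
    (ENNReal.mul_ne_top hS (ENNReal.rpow_ne_top_of_nonneg hτ enorm_ne_top)) (fun y => ?_) x k
  calc ‖fderiv ℝ f (y + h) - fderiv ℝ f y‖ₑ
      ≤ ∑ i, ‖pd i f (y + h) - pd i f y‖ₑ :=
        (fderiv ℝ f (y + h) - fderiv ℝ f y).enorm_le_sum_enorm_single
    _ ≤ ∑ i, hSemi τ (pd i f) * ‖h‖ₑ ^ τ :=
        Finset.sum_le_sum fun i _ => enorm_sub_le_hSemi_mul τ (pd i f) y h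
    _ = (∑ i, hSemi τ (pd i f)) * ‖h‖ₑ ^ τ := (Finset.sum_mul ..).symm

theorem lintegral_Ediff_sub_Ediff_le_hSemi {d : ℕ} [NeZero d] (α β : ℝ) (f : E d → ℝ)
    (x k : E d) :
    ∫⁻ h, ‖Ediff f h (x + k) - Ediff f h x‖ₑ / ‖h‖ₑ ^ ((d : ℝ) + α)
      ≤ 2 * splitPowerIntegral (volume : Measure (E d)) (β - d) (-(d + α)) * ‖k‖ₑ ^ β
        * hSemi (α + β) f := by
  rcases eq_or_ne k 0 with rfl | hk
  · simp [Ediff]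
  have hsplit := lintegral_div_enorm_rpow_le_of_split volume (nnnorm_pos.2 hk)
    (F := fun h => ‖Ediff f h (x + k) - Ediff f h x‖ₑ) (M := 2 * hSemi (α + β) f)
    (α := α) (γ := α + β) (a := α + β) (b := 0)
    (fun h _ => by simpa using enorm_Ediff_sub_Ediff_le_hSemi (α + β) f h k x)
    (fun h _ => by
      simpa [Ediff_sub_Ediff_comm f h k, enorm_eq_nnnorm] using
        enorm_Ediff_sub_Ediff_le_hSemi (α + β) f k h x)
  rw [finrank_euclideanSpace_fin, ← enorm_eq_nnnorm, zero_sub, add_sub_cancel_left,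
    show α + β - ((d : ℝ) + α) = β - d by ring] at hsplit
  exact hsplit.trans_eq (by ring)

theorem lintegral_Ediff_sub_Ediff_le_sum_hSemi_pd {d : ℕ} [NeZero d] {α β : ℝ}
    (hτ : 0 ≤ α + β - 1) {f : E d → ℝ} (hf : Differentiable ℝ f)
    (hS : ∑ i, hSemi (α + β - 1) (pd i f) ≠ ⊤) (x k : E d) :
    ∫⁻ h, ‖Ediff f h (x + k) - Ediff f h x‖ₑ / ‖h‖ₑ ^ ((d : ℝ) + α)
      ≤ splitPowerIntegral (volume : Measure (E d)) (1 - (d + α)) (β - 1 - d) * ‖k‖ₑ ^ β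
        * ∑ i, hSemi (α + β - 1) (pd i f) := by
  rcases eq_or_ne k 0 with rfl | hk
  · simp [Ediff]
  have hsplit := lintegral_div_enorm_rpow_le_of_split volume (nnnorm_pos.2 hk)
    (F := fun h => ‖Ediff f h (x + k) - Ediff f h x‖ₑ) (M := ∑ i, hSemi (α + β - 1) (pd i f))
    (α := α) (γ := α + β) (a := 1) (b := α + β - 1)
    (fun h _ => by
      simpa [Ediff_sub_Ediff_comm f h k, enorm_eq_nnnorm] using
        enorm_Ediff_sub_Ediff_le_sum_hSemi_pd hτ hf hS k h x)
    (fun h _ => by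
      simpa [enorm_eq_nnnorm, mul_right_comm] using
        enorm_Ediff_sub_Ediff_le_sum_hSemi_pd hτ hf hS h k x)
  rw [finrank_euclideanSpace_fin, ← enorm_eq_nnnorm, add_sub_cancel_left,
    show α + β - 1 - ((d : ℝ) + α) = β - 1 - d by ring] at hsplit
  exact hsplit.trans_eq (by ring)

/-- integrated first-difference estimate, case `α ∈ (0,1)`. -/
theorem integrated_first_difference_estimate
    (d : ℕ) (hd : 1 ≤ d) (α β : ℝ)
    (hα : α ∈ Set.Ioo (0 : ℝ) 1) (hβ : β ∈ Set.Ioo (0 : ℝ) 1) (hαβ : α + β ≠ 1) :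
    ∃ c : ℝ≥0, ∀ f : E d → ℝ, InHolder (α + β) f → ∀ x k : E d,
      (∫⁻ h, (‖Ediff f h (x + k) - Ediff f h x‖₊ : ℝ≥0∞) / (‖h‖₊ : ℝ≥0∞) ^ ((d : ℝ) + α))
        ≤ c * (‖k‖₊ : ℝ≥0∞) ^ β * holderNorm (α + β) f := by
  obtain ⟨hα₀, hα₁⟩ := hα
  obtain ⟨hβ₀, hβ₁⟩ := hβ
  have : NeZero d := ⟨by omega⟩
  rcases lt_or_gt_of_ne hαβ with hγ | hγ
  · set C := splitPowerIntegral (volume : Measure (E d)) (β - d) (-(d + α))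
    have hC : C ≠ ⊤ := (splitPowerIntegral_lt_top _ (by simpa) (by simp; linarith)).ne
    refine ⟨(2 * C).toNNReal, fun f _ x k => ?_⟩
    rw [coe_toNNReal (mul_ne_top ofNat_ne_top hC)]
    exact (lintegral_Ediff_sub_Ediff_le_hSemi α β f x k).trans
      (mul_le_mul_right (hSemi_le_holderNorm hγ f) _)
  · set C := splitPowerIntegral (volume : Measure (E d)) (1 - (d + α)) (β - 1 - d)
    have hC : C ≠ ⊤ := (splitPowerIntegral_lt_top _ (by simp; linarith) (by simp; linarith)).ne
    refine ⟨C.toNNReal, fun f hf x k => ?_⟩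
    have hS := sum_hSemi_pd_le_holderNorm hγ.le (by linarith) f
    have hdiff : Differentiable ℝ f :=
      hf.1.differentiable (by exact_mod_cast (Nat.floor_pos.2 hγ.le).ne')
    rw [coe_toNNReal hC]
    exact (lintegral_Ediff_sub_Ediff_le_sum_hSemi_pd (by linarith) hdiff
      (ne_top_of_le_ne_top hf.2.ne hS) x k).trans (mul_le_mul_right hS _)
end
end

section
/- Let d ≥ 1 and γ ∈ (2,3). There exists a constant c, depending only on d and γ, such that for every f ∈ C^γ(ℝ^d) and all x, h, k ∈ ℝ^d: |F_h f(x+k) − F_h f(x)| ≤ c·min(|k|^{γ−2}·|h|^2, |h|^{γ−1}·|k|)·‖f‖_{C^γ}, where F_h f(x) = f(x+h) − f(x) − ∇f(x)·h. -/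
/-!
Write `α = γ - 2`; membership in `C^γ` makes `D²f` `α`-Hölder in operator norm, with constant at
most the sum of the seminorms of the second partials, so `c = 1` works. The increment
`F_h f(x+k) - F_h f(x)` is then bounded by two mean value arguments. Read as the first-order Taylor
remainder along `h` of `f(· + k) - f`, whose derivative `Df(· + k) - Df` is Lipschitz with
constant `‖D²f‖_α |k|^α`, it is at most `‖D²f‖_α |k|^α |h|²`. Read as the increment along `k` of
`F_h f`, whose derivative is `Df(· + h) - Df - D²f · h` by symmetry of `D²f`, it is at most
`‖D²f‖_α |h|^(α+1) |k|`.
-/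

open MeasureTheory ENNReal NNReal

noncomputable section

/-- Compensated difference operator `F_h f(x) = f(x+h) - f(x) - ∇f(x)·h`. -/
def Fdiff {d : ℕ} (f : E d → ℝ) (h x : E d) : ℝ := f (x + h) - f x - fderiv ℝ f x h

section Calculus

variable {V W : Type*} [NormedAddCommGroup V] [NormedSpace ℝ V]
  [NormedAddCommGroup W] [NormedSpace ℝ W]

theorem norm_image_sub_sub_fderiv_le_of_closedBall {g : V → W} {g' : V → V →L[ℝ] W}
    (hg : ∀ y, HasFDerivAt g (g' y) y) {x h : V} {C : ℝ}
    (hC : ∀ y ∈ Metric.closedBall x ‖h‖, ‖g' y - g' x‖ ≤ C) :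
    ‖g (x + h) - g x - g' x h‖ ≤ C * ‖h‖ := by
  simpa using (convex_closedBall x ‖h‖).norm_image_sub_le_of_norm_hasFDerivWithin_le'
    (fun y _ => (hg y).hasFDerivWithinAt) hC (Metric.mem_closedBall_self (norm_nonneg h))
    (y := x + h) (by simp)

variable {f : V → W} {M α : ℝ≥0}

theorem ContDiff.differentiable_fderiv_of_two (hf : ContDiff ℝ 2 f) :
    Differentiable ℝ (fderiv ℝ f) :=
  (hf.fderiv_right (m := 1) le_rfl).differentiable one_ne_zero

theorem norm_fderiv_increment_sub_le (hDf : Differentiable ℝ (fderiv ℝ f))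
    (hD2 : HolderWith M α (fderiv ℝ (fderiv ℝ f))) (k y₁ y₂ : V) :
    ‖(fderiv ℝ f (y₂ + k) - fderiv ℝ f y₂) - (fderiv ℝ f (y₁ + k) - fderiv ℝ f y₁)‖ ≤
      M * ‖k‖ ^ (α : ℝ) * ‖y₂ - y₁‖ := by
  have hderiv (y : V) : HasFDerivAt (fun y => fderiv ℝ f (y + k) - fderiv ℝ f y)
      (fderiv ℝ (fderiv ℝ f) (y + k) - fderiv ℝ (fderiv ℝ f) y) y :=
    ((hasFDerivAt_comp_add_right k).mpr (hDf (y + k)).hasFDerivAt).sub (hDf y).hasFDerivAt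
  exact convex_univ.norm_image_sub_le_of_norm_hasFDerivWithin_le
    (fun y _ => (hderiv y).hasFDerivWithinAt)
    (fun y _ => by simpa [dist_eq_norm] using hD2.dist_le (y + k) y) trivial trivial

theorem norm_fderiv_sub_sub_fderiv_fderiv_le (hDf : Differentiable ℝ (fderiv ℝ f))
    (hD2 : HolderWith M α (fderiv ℝ (fderiv ℝ f))) (y z : V) :
    ‖fderiv ℝ f (y + z) - fderiv ℝ f y - fderiv ℝ (fderiv ℝ f) y z‖ ≤ M * ‖z‖ ^ (α + 1 : ℝ) := by
  rw [Real.rpow_add_one' (norm_nonneg z) (by positivity), ← mul_assoc]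
  refine norm_image_sub_sub_fderiv_le_of_closedBall (fun w => (hDf w).hasFDerivAt) fun w hw => ?_
  calc ‖fderiv ℝ (fderiv ℝ f) w - fderiv ℝ (fderiv ℝ f) y‖ ≤ M * ‖w - y‖ ^ (α : ℝ) := by
        simpa [dist_eq_norm] using hD2.dist_le w y
    _ ≤ M * ‖z‖ ^ (α : ℝ) := by gcongr; exact mem_closedBall_iff_norm.mp hw

theorem norm_compensated_increment_le_left (hf : ContDiff ℝ 2 f)
    (hD2 : HolderWith M α (fderiv ℝ (fderiv ℝ f))) (x h k : V) :
    ‖(f (x + k + h) - f (x + k) - fderiv ℝ f (x + k) h) - (f (x + h) - f x - fderiv ℝ f x h)‖ ≤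
      M * (‖k‖ ^ (α : ℝ) * ‖h‖ ^ (2 : ℝ)) := by
  have hfd : Differentiable ℝ f := hf.differentiable two_ne_zero
  have hderiv (y : V) : HasFDerivAt (fun y => f (y + k) - f y)
      (fderiv ℝ f (y + k) - fderiv ℝ f y) y :=
    ((hasFDerivAt_comp_add_right k).mpr (hfd (y + k)).hasFDerivAt).sub (hfd y).hasFDerivAt
  have hremainder := norm_image_sub_sub_fderiv_le_of_closedBall hderiv (x := x) (h := h)
    (C := M * ‖k‖ ^ (α : ℝ) * ‖h‖) fun y hy =>
      (norm_fderiv_increment_sub_le hf.differentiable_fderiv_of_two hD2 k x y).trans <| by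
        gcongr; exact mem_closedBall_iff_norm.mp hy
  rw [add_right_comm x k h, Real.rpow_two]
  convert hremainder using 1
  · congr 1
    simp only [sub_apply]
    abel
  · ring

theorem norm_compensated_increment_le_right (hf : ContDiff ℝ 2 f)
    (hD2 : HolderWith M α (fderiv ℝ (fderiv ℝ f))) (x h k : V) :
    ‖(f (x + k + h) - f (x + k) - fderiv ℝ f (x + k) h) - (f (x + h) - f x - fderiv ℝ f x h)‖ ≤
      M * (‖h‖ ^ (α + 1 : ℝ) * ‖k‖) := by
  have hfd : Differentiable ℝ f := hf.differentiable two_ne_zero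
  have hDf := hf.differentiable_fderiv_of_two
  have hderiv (y : V) : HasFDerivAt (fun y => f (y + h) - f y - fderiv ℝ f y h)
      (fderiv ℝ f (y + h) - fderiv ℝ f y - fderiv ℝ (fderiv ℝ f) y h) y := by
    have happly := (ContinuousLinearMap.apply ℝ W h).hasFDerivAt.comp y (hDf y).hasFDerivAt
    refine (((hasFDerivAt_comp_add_right h).mpr (hfd (y + h)).hasFDerivAt).sub
      (hfd y).hasFDerivAt).sub happly |>.congr_fderiv ?_
    ext v
    simp [(hf.contDiffAt.isSymmSndFDerivAt (by simp)) v h]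
  have := convex_univ.norm_image_sub_le_of_norm_hasFDerivWithin_le
    (fun y _ => (hderiv y).hasFDerivWithinAt)
    (fun y _ => norm_fderiv_sub_sub_fderiv_fderiv_le hDf hD2 y h) (Set.mem_univ x)
    (Set.mem_univ (x + k))
  rwa [add_sub_cancel_left, mul_assoc] at this

theorem norm_compensated_increment_le (hf : ContDiff ℝ 2 f)
    (hD2 : HolderWith M α (fderiv ℝ (fderiv ℝ f))) (x h k : V) :
    ‖(f (x + k + h) - f (x + k) - fderiv ℝ f (x + k) h) - (f (x + h) - f x - fderiv ℝ f x h)‖ ≤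
      M * min (‖k‖ ^ (α : ℝ) * ‖h‖ ^ (2 : ℝ)) (‖h‖ ^ (α + 1 : ℝ) * ‖k‖) := by
  rw [mul_min_of_nonneg _ _ M.coe_nonneg]
  exact le_min (norm_compensated_increment_le_left hf hD2 x h k)
    (norm_compensated_increment_le_right hf hD2 x h k)

end Calculus

theorem HolderWith.of_dist_le {X Y : Type*} [PseudoMetricSpace X] [PseudoMetricSpace Y]
    {C r : ℝ≥0} {g : X → Y} (h : ∀ x y, dist (g x) (g y) ≤ C * dist x y ^ (r : ℝ)) :
    HolderWith C r g := fun x y => by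
  rw [edist_dist, edist_dist, ENNReal.ofReal_rpow_of_nonneg dist_nonneg r.coe_nonneg,
    ← ENNReal.ofReal_coe_nnreal, ← ENNReal.ofReal_mul C.coe_nonneg]
  exact ENNReal.ofReal_le_ofReal (h x y)

theorem EuclideanSpace.opNorm_le_sum_norm_single {ι F : Type*} [Fintype ι] [DecidableEq ι]
    [NormedAddCommGroup F] [NormedSpace ℝ F] (L : EuclideanSpace ℝ ι →L[ℝ] F) :
    ‖L‖ ≤ ∑ i, ‖L (EuclideanSpace.single i 1)‖ := by
  refine L.opNorm_le_bound (by positivity) fun u => ?_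
  calc ‖L u‖ = ‖∑ i, u i • L (EuclideanSpace.single i 1)‖ := by
        conv_lhs => rw [← (EuclideanSpace.basisFun ι ℝ).sum_repr u]
        simp
    _ ≤ ∑ i, ‖u‖ * ‖L (EuclideanSpace.single i 1)‖ := by
        refine norm_sum_le_of_le _ fun i _ => ?_
        rw [norm_smul]
        gcongr
        exact PiLp.norm_apply_le u i
    _ = (∑ i, ‖L (EuclideanSpace.single i 1)‖) * ‖u‖ := by
        rw [Finset.sum_mul]
        simp only [mul_comm]

theorem EuclideanSpace.opNorm_le_sum_sum_norm_single {ι F : Type*} [Fintype ι] [DecidableEq ι]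
    [NormedAddCommGroup F] [NormedSpace ℝ F]
    (B : EuclideanSpace ℝ ι →L[ℝ] EuclideanSpace ℝ ι →L[ℝ] F) :
    ‖B‖ ≤ ∑ i, ∑ j, ‖B (EuclideanSpace.single i 1) (EuclideanSpace.single j 1)‖ :=
  (opNorm_le_sum_norm_single B).trans <|
    Finset.sum_le_sum fun _ _ => opNorm_le_sum_norm_single _

section HolderSpace

variable {d : ℕ}

theorem norm_sub_le_hSemi_toReal_mul {γ : ℝ} {g : E d → ℝ} (hg : hSemi γ g ≠ ⊤) (y z : E d) :
    ‖g (y + z) - g y‖ ≤ (hSemi γ g).toReal * ‖z‖ ^ γ := by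
  rcases eq_or_ne z 0 with rfl | hz
  · simpa using by positivity
  have hzγ : (‖z‖₊ : ℝ≥0∞) ^ γ ≠ ⊤ := by simp [hz]
  have hquot : (‖g (y + z) - g y‖₊ : ℝ≥0∞) / (‖z‖₊ : ℝ≥0∞) ^ γ ≤ hSemi γ g :=
    le_iSup₂ (f := fun y z => (‖g (y + z) - g y‖₊ : ℝ≥0∞) / (‖z‖₊ : ℝ≥0∞) ^ γ) y z
  have := ENNReal.toReal_mono (ENNReal.mul_ne_top hg hzγ)
    ((ENNReal.div_le_iff (by simp [hz]) hzγ).mp hquot)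
  simpa [ENNReal.toReal_mul, ← ENNReal.toReal_rpow] using this

theorem pd_pd_apply {f : E d → ℝ} {y : E d} (hf : DifferentiableAt ℝ (fderiv ℝ f) y)
    (i j : Fin d) :
    pd i (pd j f) y =
      fderiv ℝ (fderiv ℝ f) y (EuclideanSpace.single i 1) (EuclideanSpace.single j 1) := by
  change fderiv ℝ (fun x => fderiv ℝ f x (EuclideanSpace.single j 1)) y _ = _
  simp [fderiv_clm_apply hf (differentiableAt_const _)]

theorem holderNorm_of_two_le {γ : ℝ} (hγ : 2 ≤ γ) (f : E d → ℝ) :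
    holderNorm γ f = supNorm f + ∑ i, ∑ j, hSemi (γ - 2) (pd i (pd j f)) := by
  simp [holderNorm, not_lt.mpr hγ, not_lt.mpr (one_le_two.trans hγ)]

theorem holderWith_fderiv_fderiv {α : ℝ≥0} {f : E d → ℝ} (hf : ContDiff ℝ 2 f)
    (hS : ∑ i, ∑ j, hSemi α (pd i (pd j f)) ≠ ⊤) :
    HolderWith (∑ i, ∑ j, hSemi α (pd i (pd j f))).toNNReal α (fderiv ℝ (fderiv ℝ f)) := by
  have hDf := hf.differentiable_fderiv_of_two
  have hfin (i j : Fin d) : hSemi α (pd i (pd j f)) ≠ ⊤ :=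
    ENNReal.sum_ne_top.mp (ENNReal.sum_ne_top.mp hS i (Finset.mem_univ _)) j (Finset.mem_univ _)
  refine HolderWith.of_dist_le fun y w => ?_
  obtain ⟨z, rfl⟩ : ∃ z, y = w + z := ⟨y - w, by abel⟩
  rw [dist_eq_norm, dist_eq_norm, add_sub_cancel_left]
  calc _ ≤ ∑ i, ∑ j, ‖pd i (pd j f) (w + z) - pd i (pd j f) w‖ := by
        refine (EuclideanSpace.opNorm_le_sum_sum_norm_single _).trans_eq ?_
        simp [pd_pd_apply (hDf _)]
    _ ≤ ∑ i, ∑ j, (hSemi α (pd i (pd j f))).toReal * ‖z‖ ^ (α : ℝ) := by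
        gcongr with i _ j
        exact norm_sub_le_hSemi_toReal_mul (hfin i j) w z
    _ = _ := by
        simp only [← Finset.sum_mul, ENNReal.coe_toNNReal_eq_toReal,
          ENNReal.toReal_sum fun i _ => ENNReal.sum_ne_top.mpr fun j _ => hfin i j,
          ENNReal.toReal_sum fun j _ => hfin _ j]

end HolderSpace

theorem coe_nnnorm_le_mul_min_of_norm_le {V W : Type*} [NormedAddCommGroup V]
    [NormedAddCommGroup W] {v : V} {h k : W} {S : ℝ≥0} {p q : ℝ} (hp : 0 ≤ p) (hq : 0 ≤ q)
    (hv : ‖v‖ ≤ S * min (‖k‖ ^ p * ‖h‖ ^ (2 : ℝ)) (‖h‖ ^ q * ‖k‖)) :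
    (‖v‖₊ : ℝ≥0∞) ≤
      S * min ((‖k‖₊ : ℝ≥0∞) ^ p * (‖h‖₊ : ℝ≥0∞) ^ (2 : ℝ)) ((‖h‖₊ : ℝ≥0∞) ^ q * ‖k‖₊) := by
  rw [← ENNReal.coe_rpow_of_nonneg _ hp, ← ENNReal.coe_rpow_of_nonneg _ hq,
    ← ENNReal.coe_rpow_of_nonneg _ zero_le_two]
  norm_cast
  rw [← NNReal.coe_le_coe]
  simpa using hv

theorem compensated_difference_increment_bound_two_three_general
    (d : ℕ) (γ : ℝ) (hγ : γ ∈ Set.Ioo (2 : ℝ) 3) :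
    ∃ c : ℝ≥0, ∀ f : E d → ℝ, InHolder γ f → ∀ x h k : E d,
      (‖Fdiff f h (x + k) - Fdiff f h x‖₊ : ℝ≥0∞) ≤
        c * min ((‖k‖₊ : ℝ≥0∞) ^ (γ - 2) * (‖h‖₊ : ℝ≥0∞) ^ (2:ℝ))
              ((‖h‖₊ : ℝ≥0∞) ^ (γ - 1) * (‖k‖₊ : ℝ≥0∞)) * holderNorm γ f := by
  obtain ⟨hγ2, hγ3⟩ := hγ
  refine ⟨1, fun f ⟨hfC, hfin⟩ x h k => ?_⟩
  have hfloor : ⌊γ⌋₊ = 2 :=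
    Nat.floor_eq_iff (by linarith) |>.mpr ⟨by push_cast; linarith, by push_cast; linarith⟩
  have hf : ContDiff ℝ 2 f := by simpa [hfloor] using hfC
  rw [holderNorm_of_two_le hγ2.le] at hfin ⊢
  let α : ℝ≥0 := ⟨γ - 2, by linarith⟩
  have hS : ∑ i, ∑ j, hSemi α (pd i (pd j f)) ≠ ⊤ := (ENNReal.add_lt_top.mp hfin).2.ne
  have hbound := norm_compensated_increment_le hf (holderWith_fderiv_fderiv hf hS) x h k
  rw [show (α : ℝ) + 1 = γ - 1 by change γ - 2 + 1 = γ - 1; ring] at hbound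
  refine (coe_nnnorm_le_mul_min_of_norm_le (by linarith) (by linarith) hbound).trans ?_
  rw [ENNReal.coe_toNNReal hS, ENNReal.coe_one, one_mul, mul_comm]
  exact mul_le_mul' le_rfl le_add_self

/-- increment bound for compensated differences, `γ ∈ (2,3)`. -/
theorem compensated_difference_increment_bound_two_three
    (d : ℕ) (hd : 1 ≤ d) (γ : ℝ) (hγ : γ ∈ Set.Ioo (2 : ℝ) 3) :
    ∃ c : ℝ≥0, ∀ f : E d → ℝ, InHolder γ f → ∀ x h k : E d,
      (‖Fdiff f h (x + k) - Fdiff f h x‖₊ : ℝ≥0∞) ≤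
        c * min ((‖k‖₊ : ℝ≥0∞) ^ (γ - 2) * (‖h‖₊ : ℝ≥0∞) ^ (2:ℝ))
              ((‖h‖₊ : ℝ≥0∞) ^ (γ - 1) * (‖k‖₊ : ℝ≥0∞)) * holderNorm γ f :=
  compensated_difference_increment_bound_two_three_general d γ hγ
end
end
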